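/- Lower bound of contrastive loss by supervised loss (finite population version): Let classes c be drawn from a finite set C with distribution p, and for each class let S(c) be a finite nonempty set of unit-norm features with class mean μ̃_c = (1/|S(c)|) Σ_{x∈S(c)} φ(x). Define γ = P(c⁺ = c⁻) for c⁺, c⁻ drawn i.i.d. from p, and the supervised loss L*_sup = −E[ E_{x∈S(c⁺)}[ φ(x)^⊤(μ̃_{c⁺} − μ̃_{c⁻}) ] | c⁺ ≠ c⁻ ]. Then E_{c⁺}E_{x,x⁺∈S(c⁺)²}[ −φ(x)^⊤φ(x⁺)/τ + log E_{c⁻, x⁻∈S(c⁻)}[ exp(φ(x)^⊤φ(x⁻)/τ) ] ] ≥ ((1−γ)/τ)·L*_sup, for any τ > 0. -/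

import Mathlib

/-!
Jensen's inequality for the concave logarithm, applied to the mixture over classes `c⁻ ~ p` and
`x⁻ ∈ S c⁻`, bounds the log-partition term below by `⟪x, m⟫ / τ`, where `m = ∑ c, p c • μt c`.
What remains is linear in the features, and averaging over `x, x⁺ ∈ S c⁺` and `c⁺ ~ p` turns it into
`∑ c, p c * ⟪μt c, m - μt c⟫ / τ`. Because `p` sums to one, the same quantity is
`-(∑ c⁺ ≠ c⁻, p c⁺ p c⁻ ⟪μt c⁺, μt c⁺ - μt c⁻⟫) / τ`, which is `((1 - γ) / τ) * Lsup`; the pairs with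
`c⁺ = c⁻` contribute nothing.
-/

open Finset Real

theorem Real.sum_mul_le_log_sum_mul_exp {ι : Type*} (s : Finset ι) (w t : ι → ℝ)
    (hw0 : ∀ i ∈ s, 0 ≤ w i) (hw1 : ∑ i ∈ s, w i = 1) :
    ∑ i ∈ s, w i * t i ≤ log (∑ i ∈ s, w i * exp (t i)) := by
  have h := convexOn_exp.map_sum_le hw0 hw1 fun i _ => Set.mem_univ (t i)
  simp only [smul_eq_mul] at h
  calc ∑ i ∈ s, w i * t i = log (exp (∑ i ∈ s, w i * t i)) := (log_exp _).symm
    _ ≤ _ := log_le_log (exp_pos _) h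

theorem sum_mul_inv_card_mul_sum_le_log {ι α : Type*} (s : Finset ι) (p : ι → ℝ)
    (hp0 : ∀ c ∈ s, 0 ≤ p c) (hp1 : ∑ c ∈ s, p c = 1)
    (S : ι → Finset α) (hS : ∀ c ∈ s, (S c).Nonempty) (f : α → ℝ) :
    ∑ c ∈ s, p c * (((S c).card : ℝ)⁻¹ * ∑ y ∈ S c, f y) ≤
      log (∑ c ∈ s, p c * (((S c).card : ℝ)⁻¹ * ∑ y ∈ S c, exp (f y))) := by
  set w : (Σ _ : ι, α) → ℝ := fun q => p q.1 * ((S q.1).card : ℝ)⁻¹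
  have hmix : ∀ g : α → ℝ, ∑ q ∈ s.sigma S, w q * g q.2 =
      ∑ c ∈ s, p c * (((S c).card : ℝ)⁻¹ * ∑ y ∈ S c, g y) := fun g => by
    simp only [w, sum_sigma, mul_sum, mul_assoc]
  have hw1 : ∑ q ∈ s.sigma S, w q = 1 := by
    have := hmix 1
    simp only [Pi.one_apply, mul_one, sum_const, nsmul_one] at this
    rw [this, ← hp1]
    refine sum_congr rfl fun c hc => ?_
    rw [inv_mul_cancel₀ (Nat.cast_ne_zero.mpr (hS c hc).card_pos.ne'), mul_one]
  have hw0 : ∀ q ∈ s.sigma S, 0 ≤ w q := fun q hq =>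
    mul_nonneg (hp0 q.1 (mem_sigma.mp hq).1) (by positivity)
  rw [← hmix, ← hmix]
  exact Real.sum_mul_le_log_sum_mul_exp _ w (fun q => f q.2) hw0 hw1

section InnerProductSpace

variable {E : Type*} [NormedAddCommGroup E] [InnerProductSpace ℝ E]

theorem inv_card_mul_sum_inner_left (s : Finset E) (v : E) :
    (s.card : ℝ)⁻¹ * ∑ x ∈ s, inner ℝ x v = inner ℝ ((s.card : ℝ)⁻¹ • ∑ x ∈ s, x) v := by
  rw [real_inner_smul_left, sum_inner]

theorem inv_card_mul_sum_inner_right (s : Finset E) (v : E) :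
    (s.card : ℝ)⁻¹ * ∑ x ∈ s, inner ℝ v x = inner ℝ v ((s.card : ℝ)⁻¹ • ∑ x ∈ s, x) := by
  rw [real_inner_smul_right, inner_sum]

theorem inv_card_mul_inv_card_mul_sum_sum_inner_sub {s : Finset E} (hs : s.Nonempty) (v : E) :
    (s.card : ℝ)⁻¹ * (s.card : ℝ)⁻¹ * ∑ x ∈ s, ∑ y ∈ s, inner ℝ x (v - y) =
      inner ℝ ((s.card : ℝ)⁻¹ • ∑ x ∈ s, x) (v - (s.card : ℝ)⁻¹ • ∑ x ∈ s, x) := by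
  have hcard : (s.card : ℝ) ≠ 0 := Nat.cast_ne_zero.mpr hs.card_pos.ne'
  have hsub : v - (s.card : ℝ)⁻¹ • ∑ x ∈ s, x = (s.card : ℝ)⁻¹ • ∑ y ∈ s, (v - y) := by
    rw [sum_sub_distrib, sum_const, smul_sub, ← Nat.cast_smul_eq_nsmul ℝ, inv_smul_smul₀ hcard]
  simp only [hsub, ← inner_sum, ← sum_inner, real_inner_smul_left, real_inner_smul_right, mul_assoc]

theorem sum_sum_ite_mul_inner_sub {ι : Type*} [Fintype ι] [DecidableEq ι] (p : ι → ℝ)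
    (hp1 : ∑ c, p c = 1) (μ : ι → E) :
    ∑ a, ∑ b, (if a = b then 0 else p a * p b * inner ℝ (μ a) (μ a - μ b)) =
      -∑ a, p a * inner ℝ (μ a) (∑ c, p c • μ c - μ a) := by
  have hdiag : ∀ a b, (if a = b then 0 else p a * p b * inner ℝ (μ a) (μ a - μ b)) =
      p a * p b * inner ℝ (μ a) (μ a - μ b) := fun a b =>
    ite_eq_right_iff.mpr fun h => by rw [h, sub_self, inner_zero_right, mul_zero]
  have hsum_smul : ∀ a, ∑ b, p b • (μ a - μ b) = μ a - ∑ c, p c • μ c := fun a => by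
    simp only [smul_sub, sum_sub_distrib, ← sum_smul, hp1, one_smul]
  calc ∑ a, ∑ b, (if a = b then 0 else p a * p b * inner ℝ (μ a) (μ a - μ b))
      = ∑ a, p a * inner ℝ (μ a) (∑ b, p b • (μ a - μ b)) := by
        simp only [hdiag]
        simp only [inner_sum, real_inner_smul_right, mul_sum, mul_assoc]
    _ = -∑ a, p a * inner ℝ (μ a) (∑ c, p c • μ c - μ a) := by
        simp only [hsum_smul, ← neg_sub (∑ c, p c • μ c), inner_neg_right, mul_neg, sum_neg_distrib]

end InnerProductSpace

theorem stmt_8_general {E : Type*} [NormedAddCommGroup E] [InnerProductSpace ℝ E]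
    {C : Type*} [Fintype C] [DecidableEq C]
    (p : C → ℝ) (hp0 : ∀ c, 0 ≤ p c) (hp1 : ∑ c, p c = 1)
    (S : C → Finset E) (hS : ∀ c, (S c).Nonempty)
    (μt : C → E) (hμt : ∀ c, μt c = (((S c).card : ℝ)⁻¹) • ∑ x ∈ S c, x)
    (τ : ℝ)
    (γ : ℝ) (hγ1 : γ < 1)
    (Lsup : ℝ)
    (hLsup : Lsup = -(1 - γ)⁻¹ *
        ∑ cp, ∑ cm, (if cp = cm then 0 else
          p cp * p cm * (((S cp).card : ℝ)⁻¹ *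
            ∑ x ∈ S cp, (inner ℝ x (μt cp - μt cm) : ℝ)))) :
    ((1 - γ) / τ) * Lsup ≤
      ∑ cp, p cp * (((S cp).card : ℝ)⁻¹ * ((S cp).card : ℝ)⁻¹ *
        ∑ x ∈ S cp, ∑ xp ∈ S cp,
          (-((inner ℝ x xp : ℝ) / τ)
            + Real.log (∑ cm, p cm * (((S cm).card : ℝ)⁻¹ *
                ∑ xm ∈ S cm, Real.exp ((inner ℝ x xm : ℝ) / τ))))) := by
  set m := ∑ c, p c • μt c
  have hmean : ∀ c v, ((S c).card : ℝ)⁻¹ * ∑ x ∈ S c, inner ℝ x v = inner ℝ (μt c) v := by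
    intro c v
    rw [hμt, inv_card_mul_sum_inner_left]
  have hLsup' : Lsup = -(1 - γ)⁻¹ * -∑ c, p c * inner ℝ (μt c) (m - μt c) := by
    rw [hLsup, ← sum_sum_ite_mul_inner_sub p hp1 μt]
    simp only [hmean]
  have hlog : ∀ x : E, inner ℝ x m / τ ≤
      log (∑ c, p c * (((S c).card : ℝ)⁻¹ * ∑ y ∈ S c, exp (inner ℝ x y / τ))) := fun x => by
    refine le_of_eq_of_le ?_ (sum_mul_inv_card_mul_sum_le_log univ p (fun c _ => hp0 c) hp1 S
      (fun c _ => hS c) fun y => inner ℝ x y / τ)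
    simp only [← sum_div, ← mul_div_assoc, inv_card_mul_sum_inner_right, ← hμt, inner_sum,
      real_inner_smul_right, m]
  have hpair : ∀ x y : E, -(inner ℝ x y / τ) + inner ℝ x m / τ = inner ℝ x (m - y) / τ :=
    fun x y => by rw [inner_sub_right]; ring
  calc ((1 - γ) / τ) * Lsup = ∑ c, p c * (inner ℝ (μt c) (m - μt c) / τ) := by
        simp only [hLsup', ← mul_div_assoc, ← sum_div]
        field_simp [sub_ne_zero.mpr hγ1.ne']
    _ = ∑ c, p c * (((S c).card : ℝ)⁻¹ * ((S c).card : ℝ)⁻¹ *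
          ∑ x ∈ S c, ∑ y ∈ S c, (-(inner ℝ x y / τ) + inner ℝ x m / τ)) := by
        simp only [hpair, ← sum_div, ← mul_div_assoc,
          inv_card_mul_inv_card_mul_sum_sum_inner_sub (hS _), ← hμt]
    _ ≤ _ := by
        gcongr with c _ x _ y _
        · exact hp0 c
        · exact hlog x

/-- Lower bound of the expected contrastive loss by the supervised mean-classifier
loss (finite population version): with class distribution `p`, class feature sets
`S c` of unit vectors, class means `μt c`, collision probability `γ = ∑_c p(c)²`,
and supervised loss `Lsup`, the expected contrastive loss is at least
`((1-γ)/τ)·Lsup`. -/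
theorem stmt_8 {E : Type*} [NormedAddCommGroup E] [InnerProductSpace ℝ E]
    {C : Type*} [Fintype C] [DecidableEq C]
    (p : C → ℝ) (hp0 : ∀ c, 0 ≤ p c) (hp1 : ∑ c, p c = 1)
    (S : C → Finset E) (hS : ∀ c, (S c).Nonempty)
    (hunit : ∀ c, ∀ x ∈ S c, ‖x‖ = 1)
    (μt : C → E) (hμt : ∀ c, μt c = (((S c).card : ℝ)⁻¹) • ∑ x ∈ S c, x)
    (τ : ℝ) (hτ : 0 < τ)
    (γ : ℝ) (hγ : γ = ∑ c, p c ^ 2) (hγ1 : γ < 1)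
    (Lsup : ℝ)
    (hLsup : Lsup = -(1 - γ)⁻¹ *
        ∑ cp, ∑ cm, (if cp = cm then 0 else
          p cp * p cm * (((S cp).card : ℝ)⁻¹ *
            ∑ x ∈ S cp, (inner ℝ x (μt cp - μt cm) : ℝ)))) :
    ((1 - γ) / τ) * Lsup ≤
      ∑ cp, p cp * (((S cp).card : ℝ)⁻¹ * ((S cp).card : ℝ)⁻¹ *
        ∑ x ∈ S cp, ∑ xp ∈ S cp,
          (-((inner ℝ x xp : ℝ) / τ)
            + Real.log (∑ cm, p cm * (((S cm).card : ℝ)⁻¹ *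
                ∑ xm ∈ S cm, Real.exp ((inner ℝ x xm : ℝ) / τ))))) :=
  stmt_8_general p hp0 hp1 S hS μt hμt τ γ hγ1 Lsup hLsup
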